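/- For a smooth metric g of Kundt shape on ℝ^n, define I₁(g)(p) = Σ_{i,j=1}^{n-2} ∂_v g_{u x^i}(p) · ∂_v g_{u x^j}(p) · (h(p)^{-1})_{ij}, where h(p) is the positive definite block (g(p)_{x^i x^j}). Then I₁ is a first-order differential invariant of the shape-preserving pseudogroup: for every shape transformation φ and every smooth metric g of Kundt shape, I₁(φ*g)(p) = I₁(g)(φ(p)) for all p ∈ ℝ^n (Proposition on the first-order invariant I₁ = ‖w‖²_g with w = (W_i)_v dx^i). -/

import Mathlib

open Matrix

noncomputable section

/-- We work on `ℝ^(n+3)` (so the dimension is an arbitrary integer `≥ 3`), with coordinates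
`(u, x^1, …, x^{n+1}, v)`. Index of the coordinate `u`. -/
def uIdx (n : ℕ) : Fin (n + 3) := 0

/-- Index of the coordinate `v`. -/
def vIdx (n : ℕ) : Fin (n + 3) := Fin.last (n + 2)

/-- Index of the coordinate `x^i`. -/
def xIdx (n : ℕ) (i : Fin (n + 1)) : Fin (n + 3) := ⟨i.val + 1, by omega⟩

/-- Partial derivative of a scalar function `f` on `ℝ^(n+3)` in the `j`-th coordinate at `p`. -/
def partialDeriv' (n : ℕ) (f : (Fin (n + 3) → ℝ) → ℝ) (j : Fin (n + 3))
    (p : Fin (n + 3) → ℝ) : ℝ :=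
  deriv (fun t => f (Function.update p j t)) (p j)

/-- A smooth metric of Kundt shape on `ℝ^(n+3)`. -/
structure IsKundtShape (n : ℕ)
    (g : (Fin (n + 3) → ℝ) → Matrix (Fin (n + 3)) (Fin (n + 3)) ℝ) : Prop where
  smooth : ∀ i j, ContDiff ℝ (⊤ : ℕ∞) fun p => g p i j
  symm : ∀ p, (g p).IsSymm
  vv : ∀ p, g p (vIdx n) (vIdx n) = 0
  xv : ∀ p i, g p (xIdx n i) (vIdx n) = 0
  uv : ∀ p, g p (uIdx n) (vIdx n) = 1
  posDef : ∀ p, (Matrix.of fun i j : Fin (n + 1) => g p (xIdx n i) (xIdx n j)).PosDef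
  vIndep : ∀ p i j, partialDeriv' n (fun q => g q (xIdx n i) (xIdx n j)) (vIdx n) p = 0

/-- A shape transformation `φ(u,x,v) = (C(u), A(u,x), v/C'(u) + B(u,x))`. -/
def IsShapeTransform (n : ℕ) (φ : (Fin (n + 3) → ℝ) → Fin (n + 3) → ℝ) : Prop :=
  ∃ (C : ℝ → ℝ) (A : ℝ → (Fin (n + 1) → ℝ) → Fin (n + 1) → ℝ) (B : ℝ → (Fin (n + 1) → ℝ) → ℝ),
    ContDiff ℝ (⊤ : ℕ∞) C ∧
    (∀ i, ContDiff ℝ (⊤ : ℕ∞) fun q : ℝ × (Fin (n + 1) → ℝ) => A q.1 q.2 i) ∧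
    ContDiff ℝ (⊤ : ℕ∞) (fun q : ℝ × (Fin (n + 1) → ℝ) => B q.1 q.2) ∧
    (∀ u, deriv C u ≠ 0) ∧
    (∀ u x, IsUnit (Matrix.of fun i j : Fin (n + 1) =>
        deriv (fun t => A u (Function.update x j t) i) (x j))) ∧
    (∀ p, φ p (uIdx n) = C (p (uIdx n))) ∧
    (∀ p i, φ p (xIdx n i) = A (p (uIdx n)) (fun j => p (xIdx n j)) i) ∧
    (∀ p, φ p (vIdx n) =
      p (vIdx n) / deriv C (p (uIdx n)) + B (p (uIdx n)) (fun j => p (xIdx n j)))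

/-- The Jacobian matrix `Dφ_p` of `φ` at `p`. -/
def jacobianMatrix (n : ℕ) (φ : (Fin (n + 3) → ℝ) → Fin (n + 3) → ℝ)
    (p : Fin (n + 3) → ℝ) : Matrix (Fin (n + 3)) (Fin (n + 3)) ℝ :=
  Matrix.of fun i j => partialDeriv' n (fun q => φ q i) j p

/-- The pullback metric `(φ*g)(p) = (Dφ_p)ᵀ · g(φ(p)) · Dφ_p`. -/
def pullbackMetric (n : ℕ) (φ : (Fin (n + 3) → ℝ) → Fin (n + 3) → ℝ)
    (g : (Fin (n + 3) → ℝ) → Matrix (Fin (n + 3)) (Fin (n + 3)) ℝ)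
    (p : Fin (n + 3) → ℝ) : Matrix (Fin (n + 3)) (Fin (n + 3)) ℝ :=
  (jacobianMatrix n φ p)ᵀ * g (φ p) * jacobianMatrix n φ p

/-- The first-order invariant `I₁(g)(p) = Σ_{i,j} ∂_v g_{u x^i}(p) ∂_v g_{u x^j}(p) (h(p)⁻¹)_{ij}`,
where `h(p)` is the positive definite block `(g(p)_{x^i x^j})`. -/
def I₁ (n : ℕ) (g : (Fin (n + 3) → ℝ) → Matrix (Fin (n + 3)) (Fin (n + 3)) ℝ)
    (p : Fin (n + 3) → ℝ) : ℝ :=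
  ∑ i : Fin (n + 1), ∑ j : Fin (n + 1),
    partialDeriv' n (fun q => g q (uIdx n) (xIdx n i)) (vIdx n) p *
    partialDeriv' n (fun q => g q (uIdx n) (xIdx n j)) (vIdx n) p *
    (Matrix.of fun a b : Fin (n + 1) => g p (xIdx n a) (xIdx n b))⁻¹ i j


/-!
The Jacobian of a shape transformation is block lower triangular: its `u`-row is `(C', 0, 0)` and
its `x`-block is `M = ∂A/∂x`. Since `g_{vv} = g_{xv} = 0`, the `x`-block of `φ*g` is `Mᵀ h M`.
Along a `v`-line, `φ` moves only the `v`-coordinate, affinely with slope `1/C'`, and the surviving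
Jacobian entries are constant there; as `h` and `g_{uv} = 1` do not depend on `v`, the
`v`-derivative of the row `(φ*g)_{ux}` is `C' · (w/C') M = wᵀ M`. Finally `wᵀ h⁻¹ w` is unchanged under
`(w, h) ↦ (Mᵀ w, Mᵀ h M)`.
-/

open Function

section Indices

variable {n : ℕ}

lemma uIdx_ne_vIdx : uIdx n ≠ vIdx n := by
  simp [uIdx, vIdx, Fin.ext_iff]

lemma xIdx_ne_uIdx (i : Fin (n + 1)) : xIdx n i ≠ uIdx n :=
  Fin.ne_of_val_ne (Nat.succ_ne_zero i)

lemma xIdx_ne_vIdx (i : Fin (n + 1)) : xIdx n i ≠ vIdx n := by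
  simp [xIdx, vIdx, Fin.ext_iff]
  omega

lemma xIdx_injective : Injective (xIdx n) := fun i j h => by
  simpa [xIdx, Fin.ext_iff] using h

lemma eq_uIdx_or_eq_xIdx_or_eq_vIdx (a : Fin (n + 3)) :
    a = uIdx n ∨ (∃ i, a = xIdx n i) ∨ a = vIdx n := by
  rcases a with ⟨a, ha⟩
  by_cases h₀ : a = 0
  · left; simp [uIdx, h₀]
  by_cases hl : a = n + 2
  · right; right; simp [vIdx, Fin.ext_iff, hl]
  · exact Or.inr (Or.inl ⟨⟨a - 1, by omega⟩, by simp [xIdx, Fin.ext_iff]; omega⟩)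

lemma sum_univ_eq_uIdx_add_xIdx_add_vIdx {M : Type*} [AddCommMonoid M] (f : Fin (n + 3) → M) :
    ∑ a, f a = f (uIdx n) + ∑ i, f (xIdx n i) + f (vIdx n) := by
  rw [Fin.sum_univ_succ, Fin.sum_univ_castSucc]
  exact (add_assoc _ _ _).symm

end Indices

namespace Matrix

variable {ι R : Type*} [Fintype ι]

lemma transpose_mul_mul_apply [CommSemiring R] (J G : Matrix ι ι R) (a b : ι) :
    (Jᵀ * G * J) a b = ∑ d, ∑ e, J d a * G d e * J e b := by
  simp only [mul_apply, transpose_apply, Finset.sum_mul]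
  exact Finset.sum_comm

lemma vecMul_dotProduct_inv_mulVec_vecMul [DecidableEq ι] [CommRing R]
    {M : Matrix ι ι R} (hM : IsUnit M.det) (H : Matrix ι ι R) (w : ι → R) :
    w ᵥ* M ⬝ᵥ (Mᵀ * H * M)⁻¹ *ᵥ (w ᵥ* M) = w ⬝ᵥ H⁻¹ *ᵥ w := by
  have hMt : IsUnit Mᵀ.det := by rwa [det_transpose]
  have hw : Mᵀ⁻¹ *ᵥ (w ᵥ* M) = w := by
    rw [← mulVec_transpose, mulVec_mulVec, nonsing_inv_mul _ hMt, one_mulVec]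
  rw [mul_inv_rev, mul_inv_rev, ← mulVec_mulVec, ← mulVec_mulVec, hw,
    dotProduct_mulVec, vecMul_vecMul, mul_nonsing_inv _ hM, vecMul_one]

end Matrix

section KundtAlgebra

variable {n : ℕ} {J G : Matrix (Fin (n + 3)) (Fin (n + 3)) ℝ}

lemma transpose_mul_mul_submatrix_xIdx (hJ : ∀ j, J (uIdx n) (xIdx n j) = 0)
    (hGvv : G (vIdx n) (vIdx n) = 0) (hGxv : ∀ i, G (xIdx n i) (vIdx n) = 0)
    (hGvx : ∀ i, G (vIdx n) (xIdx n i) = 0) :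
    (Jᵀ * G * J).submatrix (xIdx n) (xIdx n)
      = (J.submatrix (xIdx n) (xIdx n))ᵀ * G.submatrix (xIdx n) (xIdx n)
          * J.submatrix (xIdx n) (xIdx n) := by
  ext i j
  simp only [submatrix_apply, transpose_mul_mul_apply, sum_univ_eq_uIdx_add_xIdx_add_vIdx, hJ, hGvv,
    hGxv, hGvx, mul_zero, zero_mul, add_zero, zero_add, Finset.sum_const_zero]

lemma transpose_mul_mul_apply_uIdx_xIdx (hJ : ∀ j, J (uIdx n) (xIdx n j) = 0)
    (hGvv : G (vIdx n) (vIdx n) = 0) (hGxv : ∀ i, G (xIdx n i) (vIdx n) = 0)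
    (hGvx : ∀ i, G (vIdx n) (xIdx n i) = 0) (j : Fin (n + 1)) :
    (Jᵀ * G * J) (uIdx n) (xIdx n j)
      = J (uIdx n) (uIdx n) * (∑ l, G (uIdx n) (xIdx n l) * J (xIdx n l) (xIdx n j)
          + G (uIdx n) (vIdx n) * J (vIdx n) (xIdx n j))
        + ∑ k, J (xIdx n k) (uIdx n) * ∑ l, G (xIdx n k) (xIdx n l) * J (xIdx n l) (xIdx n j) := by
  simp only [transpose_mul_mul_apply, sum_univ_eq_uIdx_add_xIdx_add_vIdx, hJ, hGvv, hGxv, hGvx,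
    mul_zero, zero_mul, add_zero, zero_add, Finset.sum_const_zero, Finset.mul_sum, mul_add,
    mul_assoc]

end KundtAlgebra

lemma hasDerivAt_update_affine {n : ℕ} {f : (Fin (n + 3) → ℝ) → ℝ} (hf : Differentiable ℝ f)
    (P : Fin (n + 3) → ℝ) (j : Fin (n + 3)) (c t₀ : ℝ) :
    HasDerivAt (fun t => f (update P j (P j + (t - t₀) / c))) (partialDeriv' n f j P / c) t₀ := by
  have hline : HasDerivAt (fun s => f (update P j s)) (partialDeriv' n f j P) (P j) :=
    (hf.comp (contDiff_update 1 P j).differentiable_one).differentiableAt.hasDerivAt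
  have haff : HasDerivAt (fun t => P j + (t - t₀) / c) (1 / c) t₀ := by
    simpa using ((hasDerivAt_id t₀).sub_const t₀).div_const c |>.const_add (P j)
  rw [← mul_one_div]
  exact (by simpa using hline : HasDerivAt _ _ (P j + (t₀ - t₀) / c)).comp t₀ haff

def vDerivUX (n : ℕ) (g : (Fin (n + 3) → ℝ) → Matrix (Fin (n + 3)) (Fin (n + 3)) ℝ)
    (p : Fin (n + 3) → ℝ) : Fin (n + 1) → ℝ :=
  fun i => partialDeriv' n (fun q => g q (uIdx n) (xIdx n i)) (vIdx n) p

lemma I₁_eq_dotProduct (n : ℕ) (g : (Fin (n + 3) → ℝ) → Matrix (Fin (n + 3)) (Fin (n + 3)) ℝ)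
    (p : Fin (n + 3) → ℝ) :
    I₁ n g p = vDerivUX n g p ⬝ᵥ ((g p).submatrix (xIdx n) (xIdx n))⁻¹ *ᵥ vDerivUX n g p := by
  simp only [I₁, dotProduct, mulVec, Finset.mul_sum]
  exact Finset.sum_congr rfl fun i _ => Finset.sum_congr rfl fun j _ => by
    simp only [vDerivUX, submatrix]; ring

lemma IsKundtShape.vIdx_xIdx {n : ℕ} {g : (Fin (n + 3) → ℝ) → Matrix (Fin (n + 3)) (Fin (n + 3)) ℝ}
    (hg : IsKundtShape n g) (p : Fin (n + 3) → ℝ) (i : Fin (n + 1)) :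
    g p (vIdx n) (xIdx n i) = 0 :=
  ((hg.symm p).apply _ _).trans (hg.xv p i)

section ShapeTransform

variable {n : ℕ} {φ : (Fin (n + 3) → ℝ) → Fin (n + 3) → ℝ} {C : ℝ → ℝ}
  {A : ℝ → (Fin (n + 1) → ℝ) → Fin (n + 1) → ℝ} {B : ℝ → (Fin (n + 1) → ℝ) → ℝ}
  {g : (Fin (n + 3) → ℝ) → Matrix (Fin (n + 3)) (Fin (n + 3)) ℝ}

lemma jacobianMatrix_uIdx_uIdx (hu : ∀ p, φ p (uIdx n) = C (p (uIdx n))) (q : Fin (n + 3) → ℝ) :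
    jacobianMatrix n φ q (uIdx n) (uIdx n) = deriv C (q (uIdx n)) := by
  simp only [jacobianMatrix, partialDeriv', of_apply, hu, update_self]

lemma jacobianMatrix_uIdx_xIdx (hu : ∀ p, φ p (uIdx n) = C (p (uIdx n))) (q : Fin (n + 3) → ℝ)
    (j : Fin (n + 1)) : jacobianMatrix n φ q (uIdx n) (xIdx n j) = 0 := by
  simp only [jacobianMatrix, partialDeriv', of_apply, hu,
    update_of_ne (xIdx_ne_uIdx j).symm, deriv_const]

lemma jacobianMatrix_xIdx_uIdx
    (hx : ∀ p i, φ p (xIdx n i) = A (p (uIdx n)) (fun j => p (xIdx n j)) i)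
    (q : Fin (n + 3) → ℝ) (i : Fin (n + 1)) :
    jacobianMatrix n φ q (xIdx n i) (uIdx n)
      = deriv (fun s => A s (fun k => q (xIdx n k)) i) (q (uIdx n)) := by
  simp only [jacobianMatrix, partialDeriv', of_apply, hx, update_self,
    update_of_ne (xIdx_ne_uIdx _)]

lemma jacobianMatrix_xIdx_xIdx
    (hx : ∀ p i, φ p (xIdx n i) = A (p (uIdx n)) (fun j => p (xIdx n j)) i)
    (q : Fin (n + 3) → ℝ) (i j : Fin (n + 1)) :
    jacobianMatrix n φ q (xIdx n i) (xIdx n j)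
      = deriv (fun s => A (q (uIdx n)) (update (fun k => q (xIdx n k)) j s) i) (q (xIdx n j)) := by
  simp only [jacobianMatrix, partialDeriv', of_apply, hx,
    update_of_ne (xIdx_ne_uIdx j).symm, update_comp_eq_of_injective' q xIdx_injective]

lemma jacobianMatrix_vIdx_xIdx
    (hv : ∀ p, φ p (vIdx n) =
      p (vIdx n) / deriv C (p (uIdx n)) + B (p (uIdx n)) (fun j => p (xIdx n j)))
    (q : Fin (n + 3) → ℝ) (j : Fin (n + 1)) :
    jacobianMatrix n φ q (vIdx n) (xIdx n j)
      = deriv (fun s => B (q (uIdx n)) (update (fun k => q (xIdx n k)) j s)) (q (xIdx n j)) := by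
  simp only [jacobianMatrix, partialDeriv', of_apply, hv, update_of_ne (xIdx_ne_uIdx j).symm,
    update_of_ne (xIdx_ne_vIdx j).symm, update_comp_eq_of_injective' q xIdx_injective,
    deriv_const_add]

lemma apply_update_vIdx
    (hu : ∀ p, φ p (uIdx n) = C (p (uIdx n)))
    (hx : ∀ p i, φ p (xIdx n i) = A (p (uIdx n)) (fun j => p (xIdx n j)) i)
    (hv : ∀ p, φ p (vIdx n) =
      p (vIdx n) / deriv C (p (uIdx n)) + B (p (uIdx n)) (fun j => p (xIdx n j)))
    (p : Fin (n + 3) → ℝ) (t : ℝ) :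
    φ (update p (vIdx n) t) = update (φ p) (vIdx n)
      (φ p (vIdx n) + (t - p (vIdx n)) / deriv C (p (uIdx n))) := by
  have hxs : (fun j => update p (vIdx n) t (xIdx n j)) = fun j => p (xIdx n j) :=
    funext fun j => update_of_ne (xIdx_ne_vIdx j) _ _
  ext a
  rcases eq_uIdx_or_eq_xIdx_or_eq_vIdx a with rfl | ⟨i, rfl⟩ | rfl
  · simp only [hu, update_of_ne uIdx_ne_vIdx]
  · simp only [hx, hxs, update_of_ne uIdx_ne_vIdx, update_of_ne (xIdx_ne_vIdx i)]
  · simp only [hv, hxs, update_of_ne uIdx_ne_vIdx, update_self]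
    ring

lemma pullbackMetric_submatrix_xIdx (hu : ∀ p, φ p (uIdx n) = C (p (uIdx n)))
    (hg : IsKundtShape n g) (p : Fin (n + 3) → ℝ) :
    (pullbackMetric n φ g p).submatrix (xIdx n) (xIdx n)
      = ((jacobianMatrix n φ p).submatrix (xIdx n) (xIdx n))ᵀ
          * (g (φ p)).submatrix (xIdx n) (xIdx n)
          * (jacobianMatrix n φ p).submatrix (xIdx n) (xIdx n) :=
  transpose_mul_mul_submatrix_xIdx (jacobianMatrix_uIdx_xIdx hu p) (hg.vv _) (hg.xv _)
    (hg.vIdx_xIdx _)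

lemma vDerivUX_pullbackMetric
    (hu : ∀ p, φ p (uIdx n) = C (p (uIdx n)))
    (hx : ∀ p i, φ p (xIdx n i) = A (p (uIdx n)) (fun j => p (xIdx n j)) i)
    (hv : ∀ p, φ p (vIdx n) =
      p (vIdx n) / deriv C (p (uIdx n)) + B (p (uIdx n)) (fun j => p (xIdx n j)))
    (hg : IsKundtShape n g) {p : Fin (n + 3) → ℝ} (hC : deriv C (p (uIdx n)) ≠ 0) :
    vDerivUX n (pullbackMetric n φ g) p
      = vDerivUX n g (φ p) ᵥ* (jacobianMatrix n φ p).submatrix (xIdx n) (xIdx n) := by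
  ext j
  set J := jacobianMatrix n φ p
  set c := deriv C (p (uIdx n))
  set G : ℝ → Matrix (Fin (n + 3)) (Fin (n + 3)) ℝ := fun t => g (φ (update p (vIdx n) t))
  -- the Jacobian entries that survive do not depend on `v`
  have hentry (t : ℝ) : pullbackMetric n φ g (update p (vIdx n) t) (uIdx n) (xIdx n j)
      = c * (∑ l, G t (uIdx n) (xIdx n l) * J (xIdx n l) (xIdx n j) + J (vIdx n) (xIdx n j))
        + ∑ k, J (xIdx n k) (uIdx n)
            * ∑ l, G t (xIdx n k) (xIdx n l) * J (xIdx n l) (xIdx n j) := by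
    rw [pullbackMetric, transpose_mul_mul_apply_uIdx_xIdx (jacobianMatrix_uIdx_xIdx hu _)
      (hg.vv _) (hg.xv _) (hg.vIdx_xIdx _), hg.uv, one_mul]
    simp only [J, c, G, jacobianMatrix_uIdx_uIdx hu, jacobianMatrix_xIdx_uIdx hx,
      jacobianMatrix_xIdx_xIdx hx, jacobianMatrix_vIdx_xIdx hv, update_of_ne uIdx_ne_vIdx,
      update_of_ne (xIdx_ne_vIdx _)]
  have hG (a b : Fin (n + 3)) : HasDerivAt (fun t => G t a b)
      (partialDeriv' n (fun q => g q a b) (vIdx n) (φ p) / c) (p (vIdx n)) := by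
    simp only [G, apply_update_vIdx hu hx hv]
    exact hasDerivAt_update_affine ((hg.smooth a b).differentiable (by simp)) _ _ _ _
  have hderiv := (((HasDerivAt.fun_sum (u := Finset.univ) fun l _ =>
      (hG (uIdx n) (xIdx n l)).mul_const (J (xIdx n l) (xIdx n j))).add_const
        (J (vIdx n) (xIdx n j))).const_mul c).fun_add
    (HasDerivAt.fun_sum (u := Finset.univ) fun k _ => (HasDerivAt.fun_sum (u := Finset.univ)
      fun l _ => (hG (xIdx n k) (xIdx n l)).mul_const (J (xIdx n l) (xIdx n j))).const_mul
        (J (xIdx n k) (uIdx n)))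
  rw [vDerivUX, partialDeriv', funext hentry, hderiv.deriv]
  simp only [hg.vIndep, zero_div, zero_mul, Finset.sum_const_zero, mul_zero, add_zero,
    Finset.mul_sum, vecMul, dotProduct, vDerivUX, submatrix_apply]
  exact Finset.sum_congr rfl fun l _ => by field_simp

end ShapeTransform

/-- **Proposition.** `I₁ = ‖w‖²_g`, with `w = (W_i)_v dx^i`, is a first-order differential
invariant of the shape-preserving pseudogroup. -/
theorem I₁_is_invariant (n : ℕ)
    (φ : (Fin (n + 3) → ℝ) → Fin (n + 3) → ℝ)
    (g : (Fin (n + 3) → ℝ) → Matrix (Fin (n + 3)) (Fin (n + 3)) ℝ)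
    (hφ : IsShapeTransform n φ) (hg : IsKundtShape n g) :
    ∀ p : Fin (n + 3) → ℝ, I₁ n (pullbackMetric n φ g) p = I₁ n g (φ p) := by
  obtain ⟨C, A, B, -, -, -, hC, hA, hu, hx, hv⟩ := hφ
  intro p
  have hM : IsUnit ((jacobianMatrix n φ p).submatrix (xIdx n) (xIdx n)).det := by
    rw [← isUnit_iff_isUnit_det]
    convert hA (p (uIdx n)) fun j => p (xIdx n j) using 1
    exact ext (jacobianMatrix_xIdx_xIdx hx p)
  rw [I₁_eq_dotProduct, I₁_eq_dotProduct, vDerivUX_pullbackMetric hu hx hv hg (hC _),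
    pullbackMetric_submatrix_xIdx hu hg]
  exact vecMul_dotProduct_inv_mulVec_vecMul hM _ _
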